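/- arXiv:1502.01037 — 2 statements merged into one kernel-verified Lean document; each statement's English description precedes it below -/
import Mathlib

section
/- Let A be a finite-dimensional real commutative algebra with no zero divisors, equipped with a Euclidean norm, and define ψ on unit vectors by ψ(a) = (a·a)/‖a·a‖. If u and v are unit vectors with ψ(u) = ψ(v), then u = v or u = -v. -/
theorem psi_injective_up_to_sign (A : Type*) [NormedCommRing A] [NormedAlgebra ℝ A]
    [FiniteDimensional ℝ A] [NoZeroDivisors A]
    (ψ : A → A) (hψ : ∀ a : A, ψ a = ‖a * a‖⁻¹ • (a * a))
    (u v : A) (hu : ‖u‖ = 1) (hv : ‖v‖ = 1) (h : ψ u = ψ v) :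
    u = v ∨ u = -v := by
  have hu0 : u ≠ 0 := by intro h0; rw [h0, norm_zero] at hu; norm_num at hu
  have hv0 : v ≠ 0 := by intro h0; rw [h0, norm_zero] at hv; norm_num at hv
  have huu : u * u ≠ 0 := mul_ne_zero hu0 hu0
  have hvv : v * v ≠ 0 := mul_ne_zero hv0 hv0
  have huun : (0:ℝ) < ‖u * u‖ := norm_pos_iff.mpr huu
  have hvvn : (0:ℝ) < ‖v * v‖ := norm_pos_iff.mpr hvv
  rw [hψ u, hψ v] at h
  have key : u * u = (‖u * u‖ * ‖v * v‖⁻¹) • (v * v) := by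
    have := congrArg (fun x => ‖u * u‖ • x) h
    simpa [smul_smul, mul_comm, mul_assoc, inv_mul_cancel₀ huun.ne', mul_inv_cancel₀ huun.ne'] using this
  set t : ℝ := ‖u * u‖ * ‖v * v‖⁻¹ with ht
  have htpos : 0 < t := mul_pos huun (inv_pos.mpr hvvn)
  set s : ℝ := Real.sqrt t with hs
  have hs2 : s * s = t := Real.mul_self_sqrt htpos.le
  have hsnn : 0 ≤ s := Real.sqrt_nonneg t
  have sq : u * u = (s • v) * (s • v) := by
    rw [smul_mul_smul_comm, hs2, key]
  rcases mul_self_eq_mul_self_iff.mp sq with h1 | h1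
  · have : ‖s • v‖ = 1 := by rw [← h1, hu]
    rw [norm_smul, hv, mul_one, Real.norm_eq_abs, abs_of_nonneg hsnn] at this
    left; rw [h1, this, one_smul]
  · have h1' : u = (-s) • v := by rw [neg_smul, h1]
    have : ‖(-s) • v‖ = 1 := by rw [← h1', hu]
    rw [norm_smul, hv, mul_one, Real.norm_eq_abs, abs_neg, abs_of_nonneg hsnn] at this
    right; rw [h1, this, one_smul]
end

section
/- If there exists an n-dimensional commutative real division algebra (or more generally an n-dimensional commutative ℝ-algebra with no zero divisors), then n ≤ 2. -/
theorem commutative_real_division_algebra_dim_le_two (n : ℕ) (A : Type*)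
    [CommRing A] [Algebra ℝ A] [NoZeroDivisors A] [Nontrivial A]
    [FiniteDimensional ℝ A] (h : Module.finrank ℝ A = n) :
    n ≤ 2 := by
  have : IsDomain A := NoZeroDivisors.to_isDomain A
  letI : Field A := fieldOfFiniteDimensional ℝ A
  have halg : Algebra.IsAlgebraic ℝ A := Algebra.IsAlgebraic.of_finite ℝ A
  let f : A →ₐ[ℝ] ℂ := IsAlgClosed.lift
  have hle := LinearMap.finrank_le_finrank_of_injective
    (f := f.toLinearMap) f.injective
  rw [h, Complex.finrank_real_complex] at hle
  exact hle
end
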